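/- Let G be a weighted undirected graph with nonnegative weights, and let π(u,v) be a shortest u–v path in G ∪ G^(k) with the minimum number of edges, written as (u = x_0, x_1, …, x_ℓ = v). Then for any index i with 0 ≤ i ≤ ℓ/4 − 1, the sets S[k](x_{4i}) and S[k](x_{4i+4}) are disjoint. -/

import Mathlib

open scoped ENNReal

namespace Stmt1

variable {V : Type*}

/-- Endpoint of a walk starting at `u` with subsequent vertices given by the list. -/
def last : V → List V → V
  | u, [] => u
  | _, x :: xs => last x xs

/-- Weight of a walk starting at `u` with subsequent vertices given by the list. -/
noncomputable def cost (w : V → V → ℝ≥0∞) : V → List V → ℝ≥0∞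
  | _, [] => 0
  | u, x :: xs => w u x + cost w x xs

/-- `h`-hop-limited distance from `u` to `v` (non-edges have weight `⊤`). -/
noncomputable def hdist (w : V → V → ℝ≥0∞) (h : ℕ) (u v : V) : ℝ≥0∞ :=
  ⨅ p ∈ {p : List V | p.length ≤ h ∧ last u p = v}, cost w u p

/-- Shortest-path distance from `u` to `v`. -/
noncomputable def dist (w : V → V → ℝ≥0∞) (u v : V) : ℝ≥0∞ :=
  ⨅ h : ℕ, hdist w h u v

/-- `S` is a set of (at most) `k` closest reachable vertices to `v` (excluding `v`),
with ties broken arbitrarily: members of `S` are reachable and distinct from `v`,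
`|S| ≤ k`, every member is at least as close as every reachable non-member, and `S`
has exactly `k` elements unless it already contains all reachable vertices. -/
def IsKClosest [Fintype V] (w : V → V → ℝ≥0∞) (k : ℕ) (v : V) (S : Finset V) : Prop :=
  (∀ u ∈ S, u ≠ v ∧ dist w v u < ⊤) ∧ S.card ≤ k ∧
  (∀ y ∈ S, ∀ z, z ∉ S → z ≠ v → dist w v z < ⊤ → dist w v y ≤ dist w v z) ∧
  (∀ z, z ∉ S → z ≠ v → dist w v z < ⊤ → S.card = k)

/-- Weight function of the union `G ∪ G^(k)` of the graph with the `k`-shortcut hopset: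
hopset edges `(u,v)` (present when `u ∈ S v` or `v ∈ S u`) get weight `d_G(u,v)`. -/
noncomputable def unionW [Fintype V] [DecidableEq V] (w : V → V → ℝ≥0∞) (S : V → Finset V)
    (u v : V) : ℝ≥0∞ :=
  if u ∈ S v ∨ v ∈ S u then min (w u v) (dist w u v) else w u v

/-! The shortcut edges of `G^(k)` make every fewest-hop shortest path locally tight. Write
`A = x_{4i}`, `M = x_{4i+2}`, `B = x_{4i+4}`. If `M` lies in `S[k](A)` or `S[k](B)` (or equals
`A` or `B`), a shortcut edge (or deleting a loop) replaces two edges of the path by at most one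
without increasing its weight. Otherwise every `z ∈ S[k](A) ∩ S[k](B)` satisfies
`d(A,z) ≤ d(A,M)` and `d(z,B) ≤ d(M,B)`, so the two shortcut edges `A–z–B` replace the four edges
from `A` to `B`. Either way the path could be made shorter in hops, a contradiction. -/

lemma last_append (u : V) (p q : List V) : last u (p ++ q) = last (last u p) q := by
  induction p generalizing u with
  | nil => rfl
  | cons x xs ih => exact ih x

lemma cost_append (w : V → V → ℝ≥0∞) (u : V) (p q : List V) :
    cost w u (p ++ q) = cost w u p + cost w (last u p) q := by
  induction p generalizing u with
  | nil => simp [cost, last]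
  | cons x xs ih => simp [cost, last, ih, add_assoc]

lemma getD_cons_append_length (u d : V) (p r : List V) :
    (u :: (p ++ r)).getD p.length d = last u p := by
  induction p generalizing u with
  | nil => rfl
  | cons x xs ih => exact ih x

lemma exists_eq_append_four_append {p : List V} {a : ℕ} (h : a + 4 ≤ p.length) :
    ∃ p₁ y₁ y₂ y₃ y₄ r, p = p₁ ++ [y₁, y₂, y₃, y₄] ++ r ∧ p₁.length = a := by
  rcases hd : p.drop a with _ | ⟨y₁, _ | ⟨y₂, _ | ⟨y₃, _ | ⟨y₄, r⟩⟩⟩⟩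
  case cons.cons.cons.cons =>
    exact ⟨p.take a, y₁, y₂, y₃, y₄, r, by simpa [hd] using (List.take_append_drop a p).symm,
      by simp only [List.length_take]; omega⟩
  all_goals
    have := congrArg List.length hd
    simp only [List.length_drop, List.length_nil, List.length_cons] at this
    omega

lemma dist_eq_iInf (w : V → V → ℝ≥0∞) (u v : V) :
    dist w u v = ⨅ p : {p : List V // last u p = v}, cost w u p := by
  refine le_antisymm (le_iInf fun p => ?_) (le_iInf fun h => le_iInf₂ fun p hp => ?_)
  · exact (iInf_le _ p.1.length).trans (iInf₂_le p.1 ⟨le_rfl, p.2⟩)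
  · exact iInf_le_of_le ⟨p, hp.2⟩ le_rfl

lemma dist_le_cost (w : V → V → ℝ≥0∞) {u v : V} {p : List V} (h : last u p = v) :
    dist w u v ≤ cost w u p :=
  (dist_eq_iInf w u v).trans_le (iInf_le_of_le ⟨p, h⟩ le_rfl)

lemma dist_le_weight (w : V → V → ℝ≥0∞) (u v : V) : dist w u v ≤ w u v := by
  simpa [cost] using dist_le_cost w (v := v) (p := [v]) rfl

lemma dist_self_eq_zero (w : V → V → ℝ≥0∞) (u : V) : dist w u u = 0 :=
  nonpos_iff_eq_zero.mp (dist_le_cost w (p := []) rfl)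

lemma dist_triangle (w : V → V → ℝ≥0∞) (u x v : V) :
    dist w u v ≤ dist w u x + dist w x v := by
  rw [dist_eq_iInf w u x, dist_eq_iInf w x v, ENNReal.iInf_add]
  refine le_iInf fun p => ?_
  rw [ENNReal.add_iInf]
  refine le_iInf fun q => ?_
  have h := dist_le_cost w (p := p.1 ++ q.1) (by rw [last_append, p.2, q.2])
  rwa [cost_append, p.2] at h

lemma exists_reverse_walk (w : V → V → ℝ≥0∞) (hsymm : ∀ u v, w u v = w v u) :
    ∀ (p : List V) (u : V), ∃ q, last (last u p) q = u ∧ cost w (last u p) q = cost w u p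
  | [], u => ⟨[], rfl, rfl⟩
  | x :: xs, u => by
    obtain ⟨q, hq, hcost⟩ := exists_reverse_walk w hsymm xs x
    refine ⟨q ++ [u], by rw [last, last_append, hq]; rfl, ?_⟩
    rw [last, cost_append, hq, hcost]
    simp only [cost, add_zero, hsymm x u, add_comm]

lemma dist_comm (w : V → V → ℝ≥0∞) (hsymm : ∀ u v, w u v = w v u) (u v : V) :
    dist w u v = dist w v u := by
  suffices h : ∀ a b, dist w a b ≤ dist w b a from le_antisymm (h u v) (h v u)
  intro a b
  rw [dist_eq_iInf w b a]
  refine le_iInf fun ⟨p, hp⟩ => ?_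
  obtain ⟨q, hq, hcost⟩ := exists_reverse_walk w hsymm p b
  rw [hp] at hq hcost
  exact hcost ▸ dist_le_cost w hq

lemma dist_le_cost_of_dist_le {w w' : V → V → ℝ≥0∞} (hle : ∀ x y, dist w x y ≤ w' x y) :
    ∀ (p : List V) (u : V), dist w u (last u p) ≤ cost w' u p
  | [], u => (dist_self_eq_zero w u).le
  | x :: xs, u =>
    calc dist w u (last x xs) ≤ dist w u x + dist w x (last x xs) := dist_triangle w u x _
      _ ≤ w' u x + cost w' x xs := add_le_add (hle u x) (dist_le_cost_of_dist_le hle xs x)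

lemma IsKClosest.dist_le_dist [Fintype V] {w : V → V → ℝ≥0∞} {k : ℕ} {v : V} {S : Finset V}
    (hS : IsKClosest w k v S) {y z : V} (hy : y ∈ S) (hz : z ∉ S) (hzv : z ≠ v) :
    dist w v y ≤ dist w v z := by
  rcases (le_top : dist w v z ≤ ⊤).lt_or_eq with hlt | htop
  · exact hS.2.2.1 y hy z hz hzv hlt
  · exact htop ▸ le_top

section unionW

variable [Fintype V] [DecidableEq V] (w : V → V → ℝ≥0∞) (S : V → Finset V)

lemma dist_le_unionW (x y : V) : dist w x y ≤ unionW w S x y := by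
  unfold unionW
  split_ifs
  · exact le_min (dist_le_weight w x y) le_rfl
  · exact dist_le_weight w x y

lemma unionW_le_dist {x y : V} (h : x ∈ S y ∨ y ∈ S x) : unionW w S x y ≤ dist w x y := by
  rw [unionW, if_pos h]
  exact min_le_right _ _

lemma dist_le_cost_unionW (p : List V) (u : V) : dist w u (last u p) ≤ cost (unionW w S) u p :=
  dist_le_cost_of_dist_le (dist_le_unionW w S) p u

lemma exists_shorter_detour {k : ℕ} (hsymm : ∀ u v, w u v = w v u)
    (hS : ∀ v, IsKClosest w k v (S v)) {A y₁ M y₃ B : V} (hAB : ¬ Disjoint (S A) (S B)) :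
    ∃ s, last A s = B ∧ s.length < 4 ∧
      cost (unionW w S) A s ≤ cost (unionW w S) A [y₁, M, y₃, B] := by
  set W := unionW w S
  have hsplit : cost W A [y₁, M, y₃, B] = cost W A [y₁, M] + cost W M [y₃, B] :=
    cost_append W A [y₁, M] [y₃, B]
  have hAM : dist w A M ≤ cost W A [y₁, M] := dist_le_cost_unionW w S [y₁, M] A
  have hMB : dist w M B ≤ cost W M [y₃, B] := dist_le_cost_unionW w S [y₃, B] M
  rw [hsplit]
  by_cases hMA : M ∈ S A
  · refine ⟨[M, y₃, B], rfl, by simp, add_le_add_left ?_ _⟩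
    exact (unionW_le_dist w S (Or.inr hMA)).trans hAM
  by_cases hMB' : M ∈ S B
  · refine ⟨[y₁, M, B], rfl, by simp, ?_⟩
    rw [show cost W A [y₁, M, B] = cost W A [y₁, M] + cost W M [B] from
      cost_append W A [y₁, M] [B]]
    refine add_le_add_right ?_ _
    simpa [cost] using (unionW_le_dist w S (Or.inl hMB')).trans hMB
  by_cases hMeqA : M = A
  · exact ⟨[y₃, B], rfl, by simp, hMeqA ▸ le_add_self⟩
  by_cases hMeqB : M = B
  · exact ⟨[y₁, M], hMeqB, by simp, le_self_add⟩
  obtain ⟨z, hzA, hzB⟩ := Finset.not_disjoint_iff.mp hAB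
  refine ⟨[z, B], rfl, by simp, ?_⟩
  have hAz : W A z ≤ cost W A [y₁, M] :=
    calc W A z ≤ dist w A z := unionW_le_dist w S (Or.inr hzA)
      _ ≤ dist w A M := (hS A).dist_le_dist hzA hMA hMeqA
      _ ≤ _ := hAM
  have hzB' : W z B ≤ cost W M [y₃, B] :=
    calc W z B ≤ dist w z B := unionW_le_dist w S (Or.inl hzB)
      _ = dist w B z := dist_comm w hsymm z B
      _ ≤ dist w B M := (hS B).dist_le_dist hzB hMB' hMeqB
      _ = dist w M B := dist_comm w hsymm B M
      _ ≤ _ := hMB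
  simpa [cost] using add_le_add hAz hzB'

end unionW

structure IsFewestHopShortestWalk (W : V → V → ℝ≥0∞) (u v : V) (p : List V) : Prop where
  last_eq : last u p = v
  cost_eq_dist : cost W u p = dist W u v
  length_le : ∀ q : List V, last u q = v → cost W u q = cost W u p → p.length ≤ q.length

lemma IsFewestHopShortestWalk.length_le_of_replace {W : V → V → ℝ≥0∞} {u v : V}
    {p p₁ s s' r : List V} (hp : IsFewestHopShortestWalk W u v p) (hsplit : p = p₁ ++ s ++ r)
    (hlast : last (last u p₁) s' = last (last u p₁) s)
    (hcost : cost W (last u p₁) s' ≤ cost W (last u p₁) s) :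
    s.length ≤ s'.length := by
  have hq : last u (p₁ ++ s' ++ r) = v := by
    rw [← hp.last_eq, hsplit]
    simp only [last_append, hlast]
  have hle : cost W u (p₁ ++ s' ++ r) ≤ cost W u p := by
    rw [hsplit]
    simp only [cost_append, last_append, hlast]
    gcongr
  have heq := le_antisymm hle (hp.cost_eq_dist ▸ dist_le_cost W hq)
  have := hp.length_le _ hq heq
  simp only [hsplit, List.length_append] at this
  omega

theorem disjoint_kclosest [Fintype V] [DecidableEq V]
    (w : V → V → ℝ≥0∞) (hsymm : ∀ u v, w u v = w v u)
    (k : ℕ)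
    (S : V → Finset V) (hS : ∀ v, IsKClosest w k v (S v))
    (u v : V) (p : List V)
    (hlast : last u p = v)
    (hmincost : cost (unionW w S) u p = dist (unionW w S) u v)
    (hminhops : ∀ q : List V, last u q = v →
      cost (unionW w S) u q = cost (unionW w S) u p → p.length ≤ q.length)
    (i : ℕ) (hi : 4 * i + 4 ≤ p.length) :
    Disjoint (S ((u :: p).getD (4 * i) u)) (S ((u :: p).getD (4 * i + 4) u)) := by
  have hp : IsFewestHopShortestWalk (unionW w S) u v p := ⟨hlast, hmincost, hminhops⟩
  obtain ⟨p₁, y₁, M, y₃, B, r, rfl, hlen⟩ := exists_eq_append_four_append hi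
  have hA : (u :: (p₁ ++ [y₁, M, y₃, B] ++ r)).getD (4 * i) u = last u p₁ := by
    rw [List.append_assoc, ← hlen, getD_cons_append_length]
  have hB : (u :: (p₁ ++ [y₁, M, y₃, B] ++ r)).getD (4 * i + 4) u = B := by
    have := getD_cons_append_length u u (p₁ ++ [y₁, M, y₃, B]) r
    rwa [List.length_append, hlen, last_append] at this
  rw [hA, hB]
  by_contra hAB
  obtain ⟨s, hs, hlen_s, hcost⟩ :=
    exists_shorter_detour w S hsymm hS hAB (y₁ := y₁) (M := M) (y₃ := y₃)
  have := hp.length_le_of_replace rfl hs hcost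
  simp only [List.length_cons, List.length_nil] at this
  omega

end Stmt1
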